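/- arXiv:1401.7911 — 2 statements merged into one kernel-verified Lean document; each statement's English description precedes it below -/
import Mathlib

section
/- Let n ≥ 3 and let u, v ∈ C^n([a,b]) be such that dim P^n_{u,v}([a,b]) = n and condition (C2) holds. Then for every s₀ ∈ (a,b), the 2×2 determinant u^{(n-2)}(s₀) v^{(n-1)}(s₀) − u^{(n-1)}(s₀) v^{(n-2)}(s₀) is nonzero. -/
/-!
If the determinant vanished at `s₀`, some nontrivial combination `ψ = α u + β v` would satisfy
`ψ^(n-2)(s₀) = ψ^(n-1)(s₀) = 0`. By (C2), `ψ^(n-2) ≡ 0` on `[a, b]`, so by Taylor's theorem `ψ`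
agrees on `[a, b]` with a polynomial of degree `≤ n - 3`. Then one of `u`, `v` is, on `[a, b]`, a
combination of the other and `1, s, …, s^(n-3)`, so `P^n_{u,v}([a,b])` is spanned by `n - 1`
functions, contradicting `dim P^n_{u,v}([a,b]) = n`.
-/

open Set

noncomputable section

/-- Iterated derivative within the interval `[a, b]`. -/
def dW (a b : ℝ) (k : ℕ) (f : ℝ → ℝ) : ℝ → ℝ :=
  iteratedDerivWithin k f (Set.Icc a b)

/-- Generating set `{1, s, ..., s^(n-3), u, v}` of the space `P^n_{u,v}`. -/
def genSet (n : ℕ) (u v : ℝ → ℝ) : Set (ℝ → ℝ) :=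
  insert u (insert v {f : ℝ → ℝ | ∃ i : ℕ, i + 3 ≤ n ∧ f = fun s : ℝ => s ^ i})

/-- The space `P^n_{u,v}` as a subspace of `ℝ → ℝ`. -/
def Pspace (n : ℕ) (u v : ℝ → ℝ) : Submodule ℝ (ℝ → ℝ) :=
  Submodule.span ℝ (genSet n u v)

/-- Restriction of functions to `[a, b]`, as a linear map. -/
def restrictMap (a b : ℝ) : (ℝ → ℝ) →ₗ[ℝ] (Set.Icc a b → ℝ) :=
  LinearMap.funLeft ℝ ℝ Subtype.val

/-- The dimension of `P^n_{u,v}([a,b])`, i.e. of the space of restrictions to `[a,b]`. -/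
def dimP (n : ℕ) (u v : ℝ → ℝ) (a b : ℝ) : ℕ :=
  Module.finrank ℝ ((Pspace n u v).map (restrictMap a b))

/-- Condition (C1): if the `(n-2)`-th derivative of an element of `P^n_{u,v}([a,b])`
vanishes at two distinct points of `[a,b]`, it vanishes identically on `[a,b]`. -/
def CondC1 (n : ℕ) (u v : ℝ → ℝ) (a b : ℝ) : Prop :=
  ∀ ψ ∈ Pspace n u v, ∀ s₁ ∈ Set.Icc a b, ∀ s₂ ∈ Set.Icc a b, s₁ ≠ s₂ →
    dW a b (n - 2) ψ s₁ = 0 → dW a b (n - 2) ψ s₂ = 0 →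
      ∀ s ∈ Set.Icc a b, dW a b (n - 2) ψ s = 0

/-- Condition (C2): if the `(n-2)`-th and `(n-1)`-th derivatives of an element of
`P^n_{u,v}([a,b])` vanish at a common interior point, the `(n-2)`-th derivative
vanishes identically on `[a,b]`. -/
def CondC2 (n : ℕ) (u v : ℝ → ℝ) (a b : ℝ) : Prop :=
  ∀ ψ ∈ Pspace n u v, ∀ s₁ ∈ Set.Ioo a b,
    dW a b (n - 2) ψ s₁ = 0 → dW a b (n - 1) ψ s₁ = 0 →
      ∀ s ∈ Set.Icc a b, dW a b (n - 2) ψ s = 0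

theorem exists_combination_eq_zero_of_det_eq_zero {K : Type*} [Field K] {A B C D : K}
    (h : A * D - B * C = 0) :
    ∃ α β : K, (α ≠ 0 ∨ β ≠ 0) ∧ α * A + β * C = 0 ∧ α * B + β * D = 0 := by
  obtain ⟨w, hw, hMw⟩ := (Matrix.exists_mulVec_eq_zero_iff (M := !![A, C; B, D])).2
    (by rw [Matrix.det_fin_two_of]; linear_combination h)
  refine ⟨w 0, w 1, ?_, ?_, ?_⟩
  · by_contra! h0
    exact hw (funext fun i => by fin_cases i <;> simp [h0])
  · simpa [Matrix.mulVec, dotProduct, mul_comm] using congrFun hMw 0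
  · simpa [Matrix.mulVec, dotProduct, mul_comm] using congrFun hMw 1

theorem finrank_span_insert_insert_le {K V : Type*} [Field K] [AddCommGroup V] [Module K V]
    {u v : V} {m : ℕ} (w : Fin m → V) {α β : K} (hαβ : α ≠ 0 ∨ β ≠ 0)
    (h : α • u + β • v ∈ Submodule.span K (Set.range w)) :
    Module.finrank K (Submodule.span K (insert u (insert v (Set.range w)))) ≤ m + 1 := by
  wlog hα : α ≠ 0 generalizing u v α β
  · rw [Set.insert_comm]
    exact this hαβ.symm (by rwa [add_comm]) (hαβ.resolve_left hα)
  have hu : u ∈ Submodule.span K (insert v (Set.range w)) := by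
    have : u = α⁻¹ • (α • u + β • v) - (α⁻¹ * β) • v := by
      rw [smul_add, smul_smul, smul_smul, inv_mul_cancel₀ hα, one_smul, add_sub_cancel_right]
    rw [this]
    exact Submodule.sub_mem _ (Submodule.smul_mem _ _ (Submodule.span_mono
      (Set.subset_insert _ _) h)) (Submodule.smul_mem _ _ (Submodule.subset_span
      (Set.mem_insert _ _)))
  have := finrank_range_le_card (R := K) (Fin.cons v w : Fin (m + 1) → V)
  rwa [Fin.range_cons, Fintype.card_fin, Set.finrank, ← Submodule.span_insert_eq_span hu] at this

theorem iteratedDerivWithin_linear_combination {s : Set ℝ} {x : ℝ} (hs : UniqueDiffOn ℝ s)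
    (hx : x ∈ s) {k : ℕ} {u v : ℝ → ℝ} (hu : ContDiffOn ℝ k u s) (hv : ContDiffOn ℝ k v s)
    (α β : ℝ) :
    iteratedDerivWithin k (α • u + β • v) s x =
      α * iteratedDerivWithin k u s x + β * iteratedDerivWithin k v s x := by
  rw [iteratedDerivWithin_add hx hs (f := α • u) (g := β • v) ((hu.const_smul α) x hx)
      ((hv.const_smul β) x hx),
    iteratedDerivWithin_const_smul_field, iteratedDerivWithin_const_smul_field, smul_eq_mul,
    smul_eq_mul]

open Polynomial

theorem eqOn_taylorWithinEval_of_iteratedDerivWithin_eq_zero {f : ℝ → ℝ} {a b : ℝ} {m : ℕ}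
    (hab : a ≤ b) (hf : ContDiffOn ℝ (m + 1) f (Icc a b))
    (h0 : ∀ x ∈ Icc a b, iteratedDerivWithin (m + 1) f (Icc a b) x = 0) :
    EqOn f (taylorWithinEval f m (Icc a b) a) (Icc a b) := fun x hx => by
  have := taylor_mean_remainder_bound hab hf hx (C := 0) fun y hy => by simp [h0 y hy]
  rwa [zero_mul, zero_div, norm_le_zero_iff, sub_eq_zero] at this

theorem exists_natDegree_le_eval_eq_taylorWithinEval (f : ℝ → ℝ) (m : ℕ) (s : Set ℝ)
    (x₀ : ℝ) : ∃ p : ℝ[X], p.natDegree ≤ m ∧ ∀ x, p.eval x = taylorWithinEval f m s x₀ x := by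
  refine ⟨∑ j ∈ Finset.range (m + 1),
    C ((j.factorial : ℝ)⁻¹ * iteratedDerivWithin j f s x₀) * (X - C x₀) ^ j, ?_, fun x => ?_⟩
  · refine natDegree_sum_le_of_forall_le _ _ fun j hj => ?_
    refine (natDegree_C_mul_le _ _).trans
      ((natDegree_pow_le_of_le j (natDegree_X_sub_C_le _)).trans ?_)
    simpa [Nat.lt_succ_iff] using hj
  · simp only [taylor_within_apply, eval_finsetSum, eval_mul, eval_C, eval_pow, eval_sub, eval_X,
      smul_eq_mul]
    exact Finset.sum_congr rfl fun j _ => by ring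

theorem eval_mem_span_of_pow_mem (p : ℝ[X]) {S : Set (ℝ → ℝ)}
    (hS : ∀ i ≤ p.natDegree, (fun x : ℝ => x ^ i) ∈ S) :
    (fun x => p.eval x) ∈ Submodule.span ℝ S := by
  have hp : (fun x => p.eval x) = ∑ i ∈ Finset.range (p.natDegree + 1),
      p.coeff i • fun x : ℝ => x ^ i := by
    funext x
    simp [eval_eq_sum_range, Finset.sum_apply]
  rw [hp]
  exact Submodule.sum_mem _ fun i hi => Submodule.smul_mem _ _
    (Submodule.subset_span (hS i (Nat.lt_succ_iff.mp (Finset.mem_range.mp hi))))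

def monomials (k : ℕ) : Fin k → ℝ → ℝ := fun i s => s ^ (i : ℕ)

theorem restrictMap_mem_span_monomials_of_iteratedDerivWithin_eq_zero {f : ℝ → ℝ} {a b : ℝ}
    {m : ℕ} (hab : a ≤ b) (hf : ContDiffOn ℝ (m + 1) f (Icc a b))
    (h0 : ∀ x ∈ Icc a b, iteratedDerivWithin (m + 1) f (Icc a b) x = 0) :
    restrictMap a b f ∈ Submodule.span ℝ (Set.range (restrictMap a b ∘ monomials (m + 1))) := by
  obtain ⟨p, hp, hpf⟩ := exists_natDegree_le_eval_eq_taylorWithinEval f m (Icc a b) a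
  have hfp : restrictMap a b f = restrictMap a b fun x => p.eval x :=
    funext fun x => (eqOn_taylorWithinEval_of_iteratedDerivWithin_eq_zero hab hf h0 x.2).trans
      (hpf x).symm
  rw [hfp, Set.range_comp, ← Submodule.map_span]
  exact Submodule.mem_map_of_mem (eval_mem_span_of_pow_mem p fun i hi => ⟨⟨i, by omega⟩, rfl⟩)

theorem genSet_eq_insert_insert (n : ℕ) (u v : ℝ → ℝ) :
    genSet n u v = insert u (insert v (Set.range (monomials (n - 2)))) := by
  refine congrArg (insert u ∘ insert v) (Set.ext fun f => ⟨?_, ?_⟩)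
  · rintro ⟨i, hi, rfl⟩
    exact ⟨⟨i, by omega⟩, rfl⟩
  · rintro ⟨i, rfl⟩
    exact ⟨i, by omega, rfl⟩

theorem dimP_le_of_smul_add_smul_mem_span_monomials {n : ℕ} {u v : ℝ → ℝ} {a b α β : ℝ}
    (hαβ : α ≠ 0 ∨ β ≠ 0)
    (h : α • restrictMap a b u + β • restrictMap a b v ∈
      Submodule.span ℝ (Set.range (restrictMap a b ∘ monomials (n - 2)))) :
    dimP n u v a b ≤ n - 2 + 1 := by
  have := finrank_span_insert_insert_le _ hαβ h
  rwa [Set.range_comp, ← Set.image_insert_eq, ← Set.image_insert_eq, ← Submodule.map_span,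
    ← genSet_eq_insert_insert] at this

theorem smul_add_smul_mem_Pspace (n : ℕ) (u v : ℝ → ℝ) (α β : ℝ) :
    α • u + β • v ∈ Pspace n u v :=
  Submodule.add_mem _ (Submodule.smul_mem _ _ (Submodule.subset_span (Set.mem_insert _ _)))
    (Submodule.smul_mem _ _ (Submodule.subset_span (Set.mem_insert_of_mem _
      (Set.mem_insert _ _))))

/-- If `dim P^n_{u,v}([a,b]) = n` and condition (C2) holds, then the
Wronskian-type determinant `u^(n-2)(s₀) v^(n-1)(s₀) − u^(n-1)(s₀) v^(n-2)(s₀)` is nonzero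
at every interior point `s₀ ∈ (a,b)`. -/
theorem statement14 (n : ℕ) (hn : 3 ≤ n) (a b : ℝ) (hab : a < b) (u v : ℝ → ℝ)
    (hu : ContDiffOn ℝ n u (Set.Icc a b)) (hv : ContDiffOn ℝ n v (Set.Icc a b))
    (hdim : dimP n u v a b = n) (hC2 : CondC2 n u v a b) :
    ∀ s₀ ∈ Set.Ioo a b,
      dW a b (n - 2) u s₀ * dW a b (n - 1) v s₀ -
        dW a b (n - 1) u s₀ * dW a b (n - 2) v s₀ ≠ 0 := by
  intro s₀ hs₀ hdet
  obtain ⟨α, β, hαβ, h₁, h₂⟩ := exists_combination_eq_zero_of_det_eq_zero hdet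
  have hdW : ∀ k ≤ n, dW a b k (α • u + β • v) s₀ = α * dW a b k u s₀ + β * dW a b k v s₀ :=
    fun k hk => iteratedDerivWithin_linear_combination (uniqueDiffOn_Icc hab)
      (Ioo_subset_Icc_self hs₀) (hu.of_le (by exact_mod_cast hk))
      (hv.of_le (by exact_mod_cast hk)) α β
  have hψ0 := hC2 _ (smul_add_smul_mem_Pspace n u v α β) s₀ hs₀
    (by rw [hdW _ (by omega)]; exact h₁) (by rw [hdW _ (by omega)]; exact h₂)
  obtain ⟨m, hm⟩ : ∃ m, n - 2 = m + 1 := ⟨n - 3, by omega⟩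
  have hψ : ContDiffOn ℝ (m + 1) (α • u + β • v) (Icc a b) :=
    ((hu.const_smul α).add (hv.const_smul β)).of_le (by exact_mod_cast (by omega : m + 1 ≤ n))
  have hR := restrictMap_mem_span_monomials_of_iteratedDerivWithin_eq_zero hab.le hψ (hm ▸ hψ0)
  rw [map_add, map_smul, map_smul, ← hm] at hR
  have := dimP_le_of_smul_add_smul_mem_span_monomials hαβ hR
  omega
end
end

section
/- Let n₁, n₂ ≥ 3 be integers, let u₁, v₁ ∈ C^{n₁}([a,b]) with dim P^{n₁}_{u₁,v₁}([a,b]) = n₁, and let u₂, v₂ ∈ C^{n₂}([c,d]) with dim P^{n₂}_{u₂,v₂}([c,d]) = n₂, and assume both univariate spaces satisfy conditions (C1) and (C2). Let R = [a,b] × [c,d] and let f : R → ℝ be such that all mixed partial derivatives D_s^i D_t^j f with 0 ≤ i ≤ n₁ and 0 ≤ j ≤ n₂ exist and are continuous on R. Then for every (s₀, t₀) ∈ (a,b) × (c,d) there exists a unique function Q in the tensor-product space P^{(n₁,n₂)}_{u,v}(R) such that D_s^i D_t^j Q(s₀, t₀) = D_s^i D_t^j f(s₀, t₀) for all 0 ≤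 i ≤ n₁ − 1 and 0 ≤ j ≤ n₂ − 1. -/
open Set

noncomputable section

/-- The mixed partial derivative `D_s^i D_t^j f` taken within the rectangle
`[a,b] × [c,d]` (first `j` derivatives in `t` within `[c,d]`, then `i` derivatives in `s`
within `[a,b]`). -/
def DmixW (a b c d : ℝ) (i j : ℕ) (f : ℝ → ℝ → ℝ) (s t : ℝ) : ℝ :=
  iteratedDerivWithin i (fun x => iteratedDerivWithin j (f x) (Set.Icc c d) t)
    (Set.Icc a b) s

/-- The tensor-product space `P^{(n₁,n₂)}_{u,v}(R)` spanned by products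
`g₁(s) g₂(t)` with `g₁ ∈ P^{n₁}_{u₁,v₁}([a,b])` and `g₂ ∈ P^{n₂}_{u₂,v₂}([c,d])`. -/
def TPspace (n₁ n₂ : ℕ) (u₁ v₁ u₂ v₂ : ℝ → ℝ) : Submodule ℝ (ℝ → ℝ → ℝ) :=
  Submodule.span ℝ {F : ℝ → ℝ → ℝ | ∃ g₁ ∈ Pspace n₁ u₁ v₁, ∃ g₂ ∈ Pspace n₂ u₂ v₂,
    F = fun s t => g₁ s * g₂ t}


/-!
At an interior point `s₀`, the Hermite jet `ψ ↦ (ψ^{(k)}(s₀))_{k<n}` is injective on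
`P^n_{u,v}`: by (C2) a vanishing jet forces `ψ^{(n-2)} ≡ 0` on `[a,b]`, and integrating down
with zero initial values gives `ψ ≡ 0` on `[a,b]`, hence `ψ = 0`: restriction to `[a,b]` is
injective on `P^n_{u,v}`, which has at most `n` generators while its restrictions span `n`
dimensions. So the jet is an isomorphism onto `ℝⁿ` and `P^n_{u,v}` has a basis `ψᵢ` dual to
it. The products `ψᵢ(s) φⱼ(t)` then span the tensor-product space and have the Kronecker mixed
jets at `(s₀, t₀)`, so an element of that space is determined by its mixed jet, and any
prescribed mixed jet is attained.
-/

open Set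

theorem eqOn_zero_of_iteratedDerivWithin_eq_zero {a b x₀ : ℝ} (hab : a < b) {m : ℕ}
    {f : ℝ → ℝ} (hf : ContDiffOn ℝ m f (Icc a b)) (hx₀ : x₀ ∈ Icc a b)
    (h₀ : ∀ k < m, iteratedDerivWithin k f (Icc a b) x₀ = 0)
    (hm : EqOn (iteratedDerivWithin m f (Icc a b)) 0 (Icc a b)) : EqOn f 0 (Icc a b) := by
  induction m generalizing f with
  | zero => simpa using hm
  | succ m ih =>
    have hf' : EqOn (derivWithin f (Icc a b)) 0 (Icc a b) := by
      refine ih (hf.derivWithin (uniqueDiffOn_Icc hab) le_rfl) (fun k hk => ?_) ?_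
      · rw [← iteratedDerivWithin_succ']
        exact h₀ (k + 1) (by omega)
      · rwa [← iteratedDerivWithin_succ']
    have hconst := constant_of_derivWithin_zero
      (hf.differentiableOn (by simp)) fun x hx => hf' (Ico_subset_Icc_self hx)
    have hfx₀ : f x₀ = 0 := by simpa using h₀ 0 (by omega)
    intro x hx
    rw [hconst x hx, ← hconst x₀ hx₀, hfx₀, Pi.zero_apply]

open scoped Classical in
theorem genSet_eq_coe_finset (n : ℕ) (u v : ℝ → ℝ) :
    genSet n u v =
      ↑(insert u (insert v ((Finset.range (n - 2)).image fun i (s : ℝ) => s ^ i))) := by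
  ext f
  simp only [genSet, Finset.coe_insert, Finset.coe_image, Finset.coe_range, mem_insert_iff,
    mem_image, mem_Iio]
  exact or_congr_right <| or_congr_right
    ⟨fun ⟨i, hi, hf⟩ => ⟨i, by omega, hf.symm⟩, fun ⟨i, hi, hf⟩ => ⟨i, by omega, hf.symm⟩⟩

section Univariate

variable {n : ℕ} {u v : ℝ → ℝ} {a b : ℝ}

instance Pspace.finiteDimensional : FiniteDimensional ℝ (Pspace n u v) := by
  rw [Pspace, genSet_eq_coe_finset]
  infer_instance

theorem finrank_Pspace_le (hn : 2 ≤ n) : Module.finrank ℝ (Pspace n u v) ≤ n := by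
  classical
  calc Module.finrank ℝ (Pspace n u v)
      ≤ (insert u (insert v ((Finset.range (n - 2)).image fun i (s : ℝ) => s ^ i))).card := by
        rw [Pspace, genSet_eq_coe_finset]
        exact finrank_span_finset_le_card _
    _ ≤ (n - 2) + 1 + 1 := by
        grw [Finset.card_insert_le, Finset.card_insert_le, Finset.card_image_le,
          Finset.card_range]
    _ = n := by omega

theorem finrank_Pspace_eq (hn : 2 ≤ n) (hdim : dimP n u v a b = n) :
    Module.finrank ℝ (Pspace n u v) = n :=
  (finrank_Pspace_le hn).antisymm (hdim.symm.le.trans (Submodule.finrank_map_le _ _))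

theorem Pspace_eq_zero_of_eqOn_zero (hn : 2 ≤ n) (hdim : dimP n u v a b = n)
    {ψ : ℝ → ℝ} (hψ : ψ ∈ Pspace n u v) (h : EqOn ψ 0 (Icc a b)) : ψ = 0 := by
  set r := (restrictMap a b).domRestrict (Pspace n u v)
  have hker : LinearMap.ker r = ⊥ := by
    have := r.finrank_range_add_finrank_ker
    rw [LinearMap.range_domRestrict, ← dimP, hdim, finrank_Pspace_eq hn hdim] at this
    exact Submodule.finrank_eq_zero.mp (by omega)
  have : (⟨ψ, hψ⟩ : Pspace n u v) ∈ LinearMap.ker r := by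
    ext x
    exact h x.2
  simpa [hker] using this

theorem Pspace_contDiffOn (hu : ContDiffOn ℝ n u (Icc a b)) (hv : ContDiffOn ℝ n v (Icc a b))
    {ψ : ℝ → ℝ} (hψ : ψ ∈ Pspace n u v) : ContDiffOn ℝ n ψ (Icc a b) := by
  induction hψ using Submodule.span_induction with
  | mem x hx =>
    rcases hx with rfl | rfl | ⟨i, -, rfl⟩
    · exact hu
    · exact hv
    · exact (contDiff_id.pow i).contDiffOn
  | zero => exact contDiffOn_const
  | add x y _ _ hx hy => exact hx.add hy
  | smul c x _ hx => exact hx.const_smul c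

theorem Pspace_eqOn_zero_of_jet_eq_zero (hn : 0 < n) (hab : a < b)
    (hu : ContDiffOn ℝ n u (Icc a b)) (hv : ContDiffOn ℝ n v (Icc a b))
    (hC2 : CondC2 n u v a b) {ψ : ℝ → ℝ} (hψ : ψ ∈ Pspace n u v) {s₀ : ℝ}
    (hs₀ : s₀ ∈ Ioo a b) (h₀ : ∀ k < n, dW a b k ψ s₀ = 0) : EqOn ψ 0 (Icc a b) :=
  eqOn_zero_of_iteratedDerivWithin_eq_zero hab
    ((Pspace_contDiffOn hu hv hψ).of_le (by simp)) (Ioo_subset_Icc_self hs₀)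
    (fun k hk => h₀ k (by omega))
    (hC2 ψ hψ s₀ hs₀ (h₀ _ (by omega)) (h₀ _ (by omega)))

theorem exists_basis_Pspace_jet_eq_single (hn : 2 ≤ n) (hab : a < b)
    (hu : ContDiffOn ℝ n u (Icc a b)) (hv : ContDiffOn ℝ n v (Icc a b))
    (hdim : dimP n u v a b = n) (hC2 : CondC2 n u v a b) {s₀ : ℝ} (hs₀ : s₀ ∈ Ioo a b) :
    ∃ ψ : Module.Basis (Fin n) ℝ (Pspace n u v),
      ∀ i k : Fin n, dW a b k (ψ i) s₀ = (Pi.single i 1 : Fin n → ℝ) k := by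
  have hsmooth (ψ : Pspace n u v) (k : Fin n) :
      ContDiffWithinAt ℝ (k : ℕ) (ψ : ℝ → ℝ) (Icc a b) s₀ :=
    ((Pspace_contDiffOn hu hv ψ.2).of_le (by exact_mod_cast k.is_lt.le)).contDiffWithinAt
      (Ioo_subset_Icc_self hs₀)
  let jet : Pspace n u v →ₗ[ℝ] (Fin n → ℝ) :=
    { toFun := fun ψ k => dW a b k ψ s₀
      map_add' := fun ψ φ => funext fun k =>
        iteratedDerivWithin_add (Ioo_subset_Icc_self hs₀) (uniqueDiffOn_Icc hab)
          (hsmooth ψ k) (hsmooth φ k)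
      map_smul' := fun c ψ => funext fun k => iteratedDerivWithin_const_smul_field c _ }
  have hjet : Function.Injective jet := by
    rw [← LinearMap.ker_eq_bot, LinearMap.ker_eq_bot']
    intro ψ hψ
    exact Subtype.ext <| Pspace_eq_zero_of_eqOn_zero hn hdim ψ.2 <|
      Pspace_eqOn_zero_of_jet_eq_zero (by omega) hab hu hv hC2 ψ.2 hs₀
        fun k hk => congrFun hψ ⟨k, hk⟩
  let e := jet.linearEquivOfInjective hjet (by simp [finrank_Pspace_eq hn hdim])
  refine ⟨(Pi.basisFun ℝ (Fin n)).map e.symm, fun i k => ?_⟩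
  have : jet (e.symm (Pi.single i 1)) = Pi.single i 1 := e.apply_symm_apply _
  simp only [Module.Basis.map_apply, Pi.basisFun_apply]
  exact congrFun this k

end Univariate

theorem TPspace_eq_span_basis {n₁ n₂ : ℕ} {u₁ v₁ u₂ v₂ : ℝ → ℝ} {ι κ : Type*}
    [Fintype ι] [Fintype κ] (ψ : Module.Basis ι ℝ (Pspace n₁ u₁ v₁))
    (φ : Module.Basis κ ℝ (Pspace n₂ u₂ v₂)) :
    TPspace n₁ n₂ u₁ v₁ u₂ v₂ =
      Submodule.span ℝ
        (range fun p : ι × κ => fun s t => (ψ p.1 : ℝ → ℝ) s * (φ p.2 : ℝ → ℝ) t) := by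
  refine le_antisymm (Submodule.span_le.2 ?_) (Submodule.span_mono ?_)
  · rintro _ ⟨g₁, hg₁, g₂, hg₂, rfl⟩
    obtain ⟨α, rfl⟩ : ∃ α : ι → ℝ, ∑ i, α i • (ψ i : ℝ → ℝ) = g₁ :=
      ⟨_, by simpa only [Submodule.coe_sum, Submodule.coe_smul] using
        congrArg Subtype.val (ψ.sum_repr ⟨g₁, hg₁⟩)⟩
    obtain ⟨β, rfl⟩ : ∃ β : κ → ℝ, ∑ j, β j • (φ j : ℝ → ℝ) = g₂ :=
      ⟨_, by simpa only [Submodule.coe_sum, Submodule.coe_smul] using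
        congrArg Subtype.val (φ.sum_repr ⟨g₂, hg₂⟩)⟩
    refine (Submodule.mem_span_range_iff_exists_fun ℝ).2 ⟨fun p => α p.1 * β p.2, ?_⟩
    funext s t
    simp only [Finset.sum_apply, Pi.smul_apply, smul_eq_mul, Finset.sum_mul_sum,
      Fintype.sum_prod_type]
    exact Finset.sum_congr rfl fun _ _ => Finset.sum_congr rfl fun _ _ => by ring
  · rintro _ ⟨p, rfl⟩
    exact ⟨ψ p.1, (ψ p.1).2, φ p.2, (φ p.2).2, rfl⟩

section Bivariate

variable {a b c d : ℝ}

theorem DmixW_sum_mul {ι : Type*} (S : Finset ι) {g h : ι → ℝ → ℝ} {i j : ℕ}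
    (hab : a < b) (hcd : c < d) (hg : ∀ p ∈ S, ContDiffOn ℝ i (g p) (Icc a b))
    (hh : ∀ p ∈ S, ContDiffOn ℝ j (h p) (Icc c d)) {s t : ℝ} (hs : s ∈ Icc a b)
    (ht : t ∈ Icc c d) :
    DmixW a b c d i j (fun s t => ∑ p ∈ S, g p s * h p t) s t =
      ∑ p ∈ S, dW a b i (g p) s * dW c d j (h p) t := by
  have inner (x : ℝ) : iteratedDerivWithin j (fun τ => ∑ p ∈ S, g p x * h p τ) (Icc c d) t =
      ∑ p ∈ S, g p x * dW c d j (h p) t := by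
    rw [iteratedDerivWithin_fun_sum ht (uniqueDiffOn_Icc hcd)
      fun p hp => (contDiffOn_const.mul (hh p hp)).contDiffWithinAt ht]
    simp [dW]
  simp only [DmixW, inner]
  rw [iteratedDerivWithin_fun_sum hs (uniqueDiffOn_Icc hab)
    fun p hp => ((hg p hp).mul contDiffOn_const).contDiffWithinAt hs]
  simp [dW]

theorem DmixW_sum_smul_of_jet_eq_single {n₁ n₂ : ℕ} {ψ : Fin n₁ → ℝ → ℝ} {φ : Fin n₂ → ℝ → ℝ}
    (hab : a < b) (hcd : c < d) (hψ : ∀ i, ContDiffOn ℝ n₁ (ψ i) (Icc a b))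
    (hφ : ∀ j, ContDiffOn ℝ n₂ (φ j) (Icc c d)) {s₀ t₀ : ℝ} (hs₀ : s₀ ∈ Icc a b)
    (ht₀ : t₀ ∈ Icc c d)
    (hψ₀ : ∀ i k : Fin n₁, dW a b k (ψ i) s₀ = (Pi.single i 1 : Fin n₁ → ℝ) k)
    (hφ₀ : ∀ j l : Fin n₂, dW c d l (φ j) t₀ = (Pi.single j 1 : Fin n₂ → ℝ) l)
    (w : Fin n₁ × Fin n₂ → ℝ) (i : Fin n₁) (j : Fin n₂) :
    DmixW a b c d i j (∑ p, w p • fun s t => ψ p.1 s * φ p.2 t) s₀ t₀ = w (i, j) := by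
  have hsum : (∑ p, w p • fun s t => ψ p.1 s * φ p.2 t) =
      fun s t => ∑ p, (w p • ψ p.1) s * φ p.2 t := by
    funext s t
    simp [Finset.sum_apply, mul_assoc]
  rw [hsum, DmixW_sum_mul (g := fun p => w p • ψ p.1) (h := fun p => φ p.2) _ hab hcd
    (fun p _ => ((hψ p.1).const_smul (w p)).of_le (by exact_mod_cast i.is_lt.le))
    (fun p _ => (hφ p.2).of_le (by exact_mod_cast j.is_lt.le)) hs₀ ht₀]
  simp only [dW] at hψ₀ hφ₀ ⊢
  simp [hψ₀, hφ₀, Pi.single_apply, Fintype.sum_prod_type]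

end Bivariate

theorem statement16_general (n₁ n₂ : ℕ) (hn₁ : 3 ≤ n₁) (hn₂ : 3 ≤ n₂)
    (a b c d : ℝ) (hab : a < b) (hcd : c < d) (u₁ v₁ u₂ v₂ : ℝ → ℝ)
    (hu₁ : ContDiffOn ℝ n₁ u₁ (Set.Icc a b)) (hv₁ : ContDiffOn ℝ n₁ v₁ (Set.Icc a b))
    (hu₂ : ContDiffOn ℝ n₂ u₂ (Set.Icc c d)) (hv₂ : ContDiffOn ℝ n₂ v₂ (Set.Icc c d))
    (hdim₁ : dimP n₁ u₁ v₁ a b = n₁) (hdim₂ : dimP n₂ u₂ v₂ c d = n₂)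
    (hC2₁ : CondC2 n₁ u₁ v₁ a b)
    (hC2₂ : CondC2 n₂ u₂ v₂ c d)
    (f : ℝ → ℝ → ℝ) :
    ∀ s₀ ∈ Set.Ioo a b, ∀ t₀ ∈ Set.Ioo c d,
      ∃ Q ∈ TPspace n₁ n₂ u₁ v₁ u₂ v₂,
        (∀ i < n₁, ∀ j < n₂, DmixW a b c d i j Q s₀ t₀ = DmixW a b c d i j f s₀ t₀) ∧
        (∀ W ∈ TPspace n₁ n₂ u₁ v₁ u₂ v₂,
          (∀ i < n₁, ∀ j < n₂, DmixW a b c d i j W s₀ t₀ = DmixW a b c d i j f s₀ t₀) →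
          ∀ s ∈ Set.Icc a b, ∀ t ∈ Set.Icc c d, W s t = Q s t) := by
  intro s₀ hs₀ t₀ ht₀
  obtain ⟨ψ, hψ₀⟩ := exists_basis_Pspace_jet_eq_single (by omega) hab hu₁ hv₁ hdim₁ hC2₁ hs₀
  obtain ⟨φ, hφ₀⟩ := exists_basis_Pspace_jet_eq_single (by omega) hcd hu₂ hv₂ hdim₂ hC2₂ ht₀
  have hjet := DmixW_sum_smul_of_jet_eq_single hab hcd
    (fun i => Pspace_contDiffOn hu₁ hv₁ (ψ i).2) (fun j => Pspace_contDiffOn hu₂ hv₂ (φ j).2)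
    (Ioo_subset_Icc_self hs₀) (Ioo_subset_Icc_self ht₀) hψ₀ hφ₀
  have hspan := TPspace_eq_span_basis ψ φ
  let fjet : Fin n₁ × Fin n₂ → ℝ := fun p => DmixW a b c d p.1 p.2 f s₀ t₀
  refine ⟨∑ p, fjet p • fun s t => (ψ p.1 : ℝ → ℝ) s * (φ p.2 : ℝ → ℝ) t,
    hspan ▸ (Submodule.mem_span_range_iff_exists_fun ℝ).2 ⟨fjet, rfl⟩,
    fun i hi j hj => hjet fjet ⟨i, hi⟩ ⟨j, hj⟩, ?_⟩
  intro W hW hWf s _ t _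
  obtain ⟨w, rfl⟩ := (Submodule.mem_span_range_iff_exists_fun ℝ).1 (hspan ▸ hW)
  have hw : w = fjet := funext fun p => by
    rw [← hjet w p.1 p.2]
    exact hWf p.1 p.1.2 p.2 p.2.2
  rw [hw]

/-- Bivariate tensor-product Hermite interpolation: under (C1), (C2)
and the dimension assumptions on both univariate spaces, for every sufficiently smooth
`f` on `R = [a,b] × [c,d]` and every interior point `(s₀,t₀)` there is a unique
`Q ∈ P^{(n₁,n₂)}_{u,v}(R)` with `D_s^i D_t^j Q(s₀,t₀) = D_s^i D_t^j f(s₀,t₀)` for all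
`0 ≤ i ≤ n₁−1`, `0 ≤ j ≤ n₂−1`. -/
theorem statement16 (n₁ n₂ : ℕ) (hn₁ : 3 ≤ n₁) (hn₂ : 3 ≤ n₂)
    (a b c d : ℝ) (hab : a < b) (hcd : c < d) (u₁ v₁ u₂ v₂ : ℝ → ℝ)
    (hu₁ : ContDiffOn ℝ n₁ u₁ (Set.Icc a b)) (hv₁ : ContDiffOn ℝ n₁ v₁ (Set.Icc a b))
    (hu₂ : ContDiffOn ℝ n₂ u₂ (Set.Icc c d)) (hv₂ : ContDiffOn ℝ n₂ v₂ (Set.Icc c d))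
    (hdim₁ : dimP n₁ u₁ v₁ a b = n₁) (hdim₂ : dimP n₂ u₂ v₂ c d = n₂)
    (hC1₁ : CondC1 n₁ u₁ v₁ a b) (hC2₁ : CondC2 n₁ u₁ v₁ a b)
    (hC1₂ : CondC1 n₂ u₂ v₂ c d) (hC2₂ : CondC2 n₂ u₂ v₂ c d)
    (f : ℝ → ℝ → ℝ)
    (hf₁ : ∀ s ∈ Set.Icc a b, ContDiffOn ℝ n₂ (f s) (Set.Icc c d))
    (hf₂ : ∀ j ≤ n₂, ∀ t ∈ Set.Icc c d,
      ContDiffOn ℝ n₁ (fun s => iteratedDerivWithin j (f s) (Set.Icc c d) t) (Set.Icc a b))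
    (hf₃ : ∀ i ≤ n₁, ∀ j ≤ n₂,
      ContinuousOn (fun p : ℝ × ℝ => DmixW a b c d i j f p.1 p.2)
        (Set.Icc a b ×ˢ Set.Icc c d)) :
    ∀ s₀ ∈ Set.Ioo a b, ∀ t₀ ∈ Set.Ioo c d,
      ∃ Q ∈ TPspace n₁ n₂ u₁ v₁ u₂ v₂,
        (∀ i < n₁, ∀ j < n₂, DmixW a b c d i j Q s₀ t₀ = DmixW a b c d i j f s₀ t₀) ∧
        (∀ W ∈ TPspace n₁ n₂ u₁ v₁ u₂ v₂,
          (∀ i < n₁, ∀ j < n₂, DmixW a b c d i j W s₀ t₀ = DmixW a b c d i j f s₀ t₀) →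
          ∀ s ∈ Set.Icc a b, ∀ t ∈ Set.Icc c d, W s t = Q s t) :=
  statement16_general n₁ n₂ hn₁ hn₂ a b c d hab hcd u₁ v₁ u₂ v₂ hu₁ hv₁ hu₂ hv₂ hdim₁ hdim₂ hC2₁
    hC2₂ f
end
end
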